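/- arXiv:1405.4093 — 2 statements merged into one kernel-verified Lean document; each statement's English description precedes it below -/
import Mathlib

section
/- Let L be a Heisenberg Lie color algebra of type (G, g_0, ε). Then L is (the grading of) a Heisenberg Lie superalgebra if and only if ε(g, -g+g_0) ∈ {1,-1} for every g ∈ G with L_g ≠ 0. -/
/-! All brackets lie in `F z` and `z` is central, so a Heisenberg color algebra is two-step
nilpotent and every super Jacobi identity holds trivially. A nonzero bracket of `x ∈ L_g` and
`y ∈ L_h` forces `g + h = g₀`, and a nonzero `x ∈ L_g` is either central (then `g = g₀`, where
`ε(g₀, 0) = 1`) or brackets nontrivially with some `y ∈ L_{-g+g₀}`; comparing color and super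
skew-symmetry on such a pair gives `ε(g, -g + g₀) = ±1`. Conversely, when these values are `±1`,
call `L_g` odd exactly when `ε(g, -g + g₀) = -1`: since `ε(h, g) = ε(g, h)⁻¹`, the degrees `g` and
`-g + g₀` are equally odd, so even and odd parts never bracket and the color sign `-ε(g, h)` is
the super sign. -/

section Parity

variable {F G : Type*} [Field F] [AddCommGroup G] {ε : G → G → Fˣ} {g₀ : G}

lemma map_zero_eq_one_of_map_add_eq_mul {M : Type*} [Group M] {f : G → M}
    (hf : ∀ h k : G, f (h + k) = f h * f k) : f 0 = 1 := by
  simpa using hf 0 0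

open Classical in
noncomputable def colorParity (ε : G → G → Fˣ) (g₀ g : G) : ZMod 2 :=
  if (ε g (-g + g₀) : F) = -1 then 1 else 0

lemma colorParity_self (hchar : (2 : F) ≠ 0) (hεmul : ∀ g h k : G, ε g (h + k) = ε g h * ε g k) :
    colorParity ε g₀ g₀ = 0 := by
  have h1 : (1 : F) ≠ -1 := fun h => hchar (by linear_combination h)
  simp [colorParity, map_zero_eq_one_of_map_add_eq_mul (hεmul g₀), h1]

lemma colorParity_eq_of_add_eq (hεskew : ∀ g h : G, ε g h = (ε h g)⁻¹) {g h : G}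
    (hgh : g + h = g₀) : colorParity ε g₀ g = colorParity ε g₀ h := by
  obtain rfl : h = -g + g₀ := eq_neg_add_of_add_eq hgh
  have hg : -(-g + g₀) + g₀ = g := by abel
  unfold colorParity
  rw [hg, hεskew (-g + g₀) g, Units.val_inv_eq_inv_val, inv_eq_iff_eq_inv, inv_neg, inv_one]

lemma superSign_colorParity (hchar : (2 : F) ≠ 0) (hεskew : ∀ g h : G, ε g h = (ε h g)⁻¹)
    {g h : G} (hgh : g + h = g₀)
    (hε : (ε g (-g + g₀) : F) = 1 ∨ (ε g (-g + g₀) : F) = -1) :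
    (if colorParity ε g₀ g = 1 ∧ colorParity ε g₀ h = 1 then (1 : F) else -1) = -(ε g h : F) := by
  simp only [← colorParity_eq_of_add_eq hεskew hgh, and_self]
  obtain rfl : h = -g + g₀ := eq_neg_add_of_add_eq hgh
  have h1 : (1 : F) ≠ -1 := fun h => hchar (by linear_combination h)
  rcases hε with hε | hε <;> simp [colorParity, hε, h1]

end Parity

lemma iSupIndep.eq_of_mem_of_mem {R M ι : Type*} [Ring R] [AddCommGroup M] [Module R M]
    {p : ι → Submodule R M} (hp : iSupIndep p) {x : M} (hx : x ≠ 0) {i j : ι}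
    (hi : x ∈ p i) (hj : x ∈ p j) : i = j := by
  by_contra hij
  exact hx (Submodule.disjoint_def.mp (hp.pairwiseDisjoint hij) x hi hj)

lemma exists_mem_apply_ne_zero_of_iSup_eq_top {R M N ι : Type*} [Ring R] [AddCommGroup M]
    [Module R M] [AddCommGroup N] [Module R N] {p : ι → Submodule R M} (hp : ⨆ i, p i = ⊤)
    {f : M →ₗ[R] N} (hf : f ≠ 0) : ∃ i, ∃ y ∈ p i, f y ≠ 0 := by
  by_contra! h
  exact hf (LinearMap.ker_eq_top.mp (top_le_iff.mp (hp ▸ iSup_le fun i y hy => h i y hy)))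

section Heisenberg

variable {F L G : Type*} [Field F] [AddCommGroup L] [Module F L]
  {Lg : G → Submodule F L} {br : L →ₗ[F] L →ₗ[F] L} {z : L} {g₀ : G}

lemma bracket_mem_span_singleton
    (hder : Submodule.span F {w : L | ∃ x y : L, br x y = w} = (F ∙ z)) (x y : L) :
    br x y ∈ F ∙ z :=
  hder ▸ Submodule.subset_span ⟨x, y, rfl⟩

lemma bracket_bracket_left_eq_zero (hcen : ∀ x : L, (∀ y : L, br x y = 0) ↔ x ∈ (F ∙ z))
    (hder : Submodule.span F {w : L | ∃ x y : L, br x y = w} = (F ∙ z)) (x y t : L) :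
    br (br x y) t = 0 :=
  (hcen _).mpr (bracket_mem_span_singleton hder x y) t

lemma bracket_bracket_right_eq_zero {ε : G → G → Fˣ}
    (hskew : ∀ (g h : G) (x y : L), x ∈ Lg g → y ∈ Lg h → br x y = -((ε g h : F) • br y x))
    (hzg : z ∈ Lg g₀) (hcen : ∀ x : L, (∀ y : L, br x y = 0) ↔ x ∈ (F ∙ z))
    (hder : Submodule.span F {w : L | ∃ x y : L, br x y = w} = (F ∙ z))
    {h : G} {y : L} (hy : y ∈ Lg h) (x t : L) : br y (br x t) = 0 := by
  obtain ⟨c, hc⟩ := Submodule.mem_span_singleton.mp (bracket_mem_span_singleton hder x t)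
  rw [← hc, map_smul, hskew h g₀ y z hy hzg, (hcen z).mpr (Submodule.mem_span_singleton_self z)]
  simp

lemma eq_of_bracket_eq_zero (hind : iSupIndep Lg) (hzg : z ∈ Lg g₀)
    (hcen : ∀ x : L, (∀ y : L, br x y = 0) ↔ x ∈ (F ∙ z))
    {g : G} {x : L} (hx0 : x ≠ 0) (hx : x ∈ Lg g) (hxc : ∀ y, br x y = 0) : g = g₀ :=
  hind.eq_of_mem_of_mem hx0 hx ((Submodule.span_singleton_le_iff_mem z _).mpr hzg ((hcen x).mp hxc))

lemma add_eq_of_bracket_ne_zero [AddCommGroup G] (hind : iSupIndep Lg)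
    (hgr : ∀ (g h : G) (x y : L), x ∈ Lg g → y ∈ Lg h → br x y ∈ Lg (g + h))
    (hzg : z ∈ Lg g₀) (hder : Submodule.span F {w : L | ∃ x y : L, br x y = w} = (F ∙ z))
    {g h : G} {x y : L} (hx : x ∈ Lg g) (hy : y ∈ Lg h) (hxy : br x y ≠ 0) : g + h = g₀ :=
  hind.eq_of_mem_of_mem hxy (hgr g h x y hx hy)
    ((Submodule.span_singleton_le_iff_mem z _).mpr hzg (bracket_mem_span_singleton hder x y))

lemma neg_color_eq_of_bracket_eq_smul {ε : G → G → Fˣ}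
    (hskew : ∀ (g h : G) (x y : L), x ∈ Lg g → y ∈ Lg h → br x y = -((ε g h : F) • br y x))
    {g h : G} {x y : L} (hx : x ∈ Lg g) (hy : y ∈ Lg h) (hxy : br x y ≠ 0) {s : F}
    (hs : br x y = s • br y x) : -(ε g h : F) = s := by
  have hyx : br y x ≠ 0 := fun h0 => hxy (by rw [hs, h0, smul_zero])
  exact smul_left_injective F hyx ((neg_smul _ _).trans ((hskew g h x y hx hy).symm.trans hs))

end Heisenberg

theorem heisenberg_color_is_super_iff_general
    (F : Type*) [Field F] (hchar : (2 : F) ≠ 0)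
    (L : Type*) [AddCommGroup L] [Module F L]
    (G : Type*) [AddCommGroup G] [DecidableEq G]
    (ε : G → G → Fˣ)
    (hεskew : ∀ g h : G, ε g h = (ε h g)⁻¹)
    (hεmul : ∀ g h k : G, ε g (h + k) = ε g h * ε g k)
    (Lg : G → Submodule F L) (hint : DirectSum.IsInternal Lg)
    (br : L →ₗ[F] L →ₗ[F] L)
    (hgr : ∀ (g h : G) (x y : L), x ∈ Lg g → y ∈ Lg h → br x y ∈ Lg (g + h))
    (hskew : ∀ (g h : G) (x y : L), x ∈ Lg g → y ∈ Lg h →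
      br x y = -((ε g h : F) • br y x))
    -- Heisenberg: the center is one-dimensional, spanned by `z ∈ L_{g₀}`,
    -- and coincides with the derived subalgebra
    (g₀ : G) (z : L) (hzg : z ∈ Lg g₀)
    (hcen : ∀ x : L, (∀ y : L, br x y = 0) ↔ x ∈ (F ∙ z))
    (hder : Submodule.span F {w : L | ∃ x y : L, br x y = w} = (F ∙ z)) :
    (∃ δ : G → ZMod 2,
      δ g₀ = 0 ∧
      -- super skew-symmetry
      (∀ (g h : G) (x y : L), x ∈ Lg g → y ∈ Lg h →
        br x y = (if δ g = 1 ∧ δ h = 1 then (1 : F) else -1) • br y x) ∧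
      -- super Jacobi identity
      (∀ (g h j : G) (x y t : L), x ∈ Lg g → y ∈ Lg h → t ∈ Lg j →
        br x (br y t) = br (br x y) t +
          (if δ g = 1 ∧ δ h = 1 then (-1 : F) else 1) • br y (br x t)) ∧
      -- the even part brackets trivially with the odd part
      (∀ (g h : G) (x y : L), δ g = 0 → δ h = 1 → x ∈ Lg g → y ∈ Lg h →
        br x y = 0)) ↔
    (∀ g : G, Lg g ≠ ⊥ → ((ε g (-g + g₀) : F) = 1 ∨ (ε g (-g + g₀) : F) = -1)) := by
  have hind := hint.submodule_iSupIndep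
  constructor
  · rintro ⟨δ, -, hss, -⟩ g hg
    obtain ⟨x, hx, hx0⟩ := (Submodule.ne_bot_iff _).mp hg
    by_cases hxc : ∀ y, br x y = 0
    · simp [eq_of_bracket_eq_zero hind hzg hcen hx0 hx hxc,
        map_zero_eq_one_of_map_add_eq_mul (hεmul g₀)]
    obtain ⟨h, y, hy, hxy⟩ := exists_mem_apply_ne_zero_of_iSup_eq_top hint.submodule_iSup_eq_top
      (f := br x) fun h0 => hxc fun y => by simp [h0]
    obtain rfl := eq_neg_add_of_add_eq (add_eq_of_bracket_ne_zero hind hgr hzg hder hx hy hxy)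
    have hε := neg_color_eq_of_bracket_eq_smul hskew hx hy hxy (hss _ _ x y hx hy)
    split_ifs at hε
    · exact Or.inr (by linear_combination -hε)
    · exact Or.inl (by linear_combination -hε)
  · intro hε
    refine ⟨colorParity ε g₀, colorParity_self hchar hεmul, fun g h x y hx hy => ?_,
      fun g h _ x y t hx hy _ => ?_, fun g h x y hg hh hx hy => ?_⟩
    · by_cases hxy : br x y = 0
      · rw [hxy, hskew h g y x hy hx, hxy]
        simp
      have hgh := add_eq_of_bracket_ne_zero hind hgr hzg hder hx hy hxy
      have hLg : Lg g ≠ ⊥ := (Submodule.ne_bot_iff _).mpr ⟨x, hx, fun h0 => hxy (by simp [h0])⟩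
      rw [superSign_colorParity hchar hεskew hgh (hε g hLg), hskew g h x y hx hy, neg_smul]
    · simp [bracket_bracket_right_eq_zero hskew hzg hcen hder hx,
        bracket_bracket_right_eq_zero hskew hzg hcen hder hy,
        bracket_bracket_left_eq_zero hcen hder]
    · by_contra hxy
      have := colorParity_eq_of_add_eq hεskew (add_eq_of_bracket_ne_zero hind hgr hzg hder hx hy hxy)
      simp [hg, hh] at this

/-- Lemma 5.6: a Heisenberg Lie color algebra of type `(G, g₀, ε)` is (the
grading of) a Heisenberg Lie superalgebra if and only if
`ε(g, -g+g₀) ∈ {1,-1}` for every `g ∈ G` with `L_g ≠ 0`.  Being a graded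
Heisenberg superalgebra is expressed by the existence of a parity assignment
`δ : G → ℤ/2` on the components such that the bracket is super skew-symmetric
and satisfies the super Jacobi identity for this parity, the even part
brackets trivially with the odd part, and the center is even. -/
theorem heisenberg_color_is_super_iff
    (F : Type*) [Field F] [IsAlgClosed F] (hchar : (2 : F) ≠ 0)
    (L : Type*) [AddCommGroup L] [Module F L]
    (G : Type*) [AddCommGroup G] [DecidableEq G]
    (ε : G → G → Fˣ)
    (hεskew : ∀ g h : G, ε g h = (ε h g)⁻¹)
    (hεmul : ∀ g h k : G, ε g (h + k) = ε g h * ε g k)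
    (Lg : G → Submodule F L) (hint : DirectSum.IsInternal Lg)
    (br : L →ₗ[F] L →ₗ[F] L)
    (hgr : ∀ (g h : G) (x y : L), x ∈ Lg g → y ∈ Lg h → br x y ∈ Lg (g + h))
    (hskew : ∀ (g h : G) (x y : L), x ∈ Lg g → y ∈ Lg h →
      br x y = -((ε g h : F) • br y x))
    (hjac : ∀ (g h j : G) (x y t : L), x ∈ Lg g → y ∈ Lg h → t ∈ Lg j →
      br x (br y t) = br (br x y) t + (ε g h : F) • br y (br x t))
    -- Heisenberg: the center is one-dimensional, spanned by `z ∈ L_{g₀}`,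
    -- and coincides with the derived subalgebra
    (g₀ : G) (z : L) (hz0 : z ≠ 0) (hzg : z ∈ Lg g₀)
    (hcen : ∀ x : L, (∀ y : L, br x y = 0) ↔ x ∈ (F ∙ z))
    (hder : Submodule.span F {w : L | ∃ x y : L, br x y = w} = (F ∙ z))
    (hεdiag : ∀ g : G, 2 • g = g₀ → Lg g ≠ ⊥ → (ε g g : F) = -1) :
    (∃ δ : G → ZMod 2,
      δ g₀ = 0 ∧
      -- super skew-symmetry
      (∀ (g h : G) (x y : L), x ∈ Lg g → y ∈ Lg h →
        br x y = (if δ g = 1 ∧ δ h = 1 then (1 : F) else -1) • br y x) ∧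
      -- super Jacobi identity
      (∀ (g h j : G) (x y t : L), x ∈ Lg g → y ∈ Lg h → t ∈ Lg j →
        br x (br y t) = br (br x y) t +
          (if δ g = 1 ∧ δ h = 1 then (-1 : F) else 1) • br y (br x t)) ∧
      -- the even part brackets trivially with the odd part
      (∀ (g h : G) (x y : L), δ g = 0 → δ h = 1 → x ∈ Lg g → y ∈ Lg h →
        br x y = 0)) ↔
    (∀ g : G, Lg g ≠ ⊥ → ((ε g (-g + g₀) : F) = 1 ∨ (ε g (-g + g₀) : F) = -1)) :=
  heisenberg_color_is_super_iff_general F hchar L G ε hεskew hεmul Lg hint br hgr hskew g₀ z hzg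
    hcen hder
end

section
/- Let H_n^λ (λ ∈ (F^×)^k, n = 2k+2, F algebraically closed of characteristic 0) be the twisted Heisenberg algebra with basis {z,u,e_1,ê_1,…,e_k,ê_k} and nonzero brackets [e_i,ê_i] = λ_i z, [u,e_i] = λ_i ê_i, [u,ê_i] = λ_i e_i. Then the group T of automorphisms diagonal with respect to the basis {u, z, u_i = e_i + ê_i, v_i = e_i − ê_i} is a maximal torus of Aut(H_n^λ), consisting exactly of the maps u ↦ u, z ↦ γz, u_i ↦ α_i u_i, v_i ↦ (γ/α_i) v_i for γ, α_i ∈ F^×. -/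
abbrev TwIdx (k : ℕ) := Unit ⊕ Unit ⊕ (Fin k × Bool)

def TwPair {k : ℕ} (p q : TwIdx k) : Prop :=
  ∃ i : Fin k, ∃ s : Bool,
    (p = Sum.inr (Sum.inr (i, s)) ∧ q = Sum.inr (Sum.inr (i, !s))) ∨
    (p = Sum.inr (Sum.inl ()) ∧ q = Sum.inr (Sum.inr (i, s))) ∨
    (p = Sum.inr (Sum.inr (i, s)) ∧ q = Sum.inr (Sum.inl ()))

/-- The explicit diagonal automorphisms of `H_n^λ` in the basis
`{u, z, u_i, v_i}`: `u ↦ u`, `z ↦ γ z`, `u_i ↦ α_i u_i`, `v_i ↦ (γ/α_i) v_i`. -/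
def IsDiagTwAut {F : Type*} [Field F] {L : Type*} [LieRing L] [LieAlgebra F L]
    {k : ℕ} (c : Module.Basis (TwIdx k) F L) (f : L ≃ₗ[F] L) : Prop :=
  ∃ (γ : F) (α : Fin k → F), γ ≠ 0 ∧ (∀ i, α i ≠ 0) ∧
    f (c (Sum.inr (Sum.inl ()))) = c (Sum.inr (Sum.inl ())) ∧
    f (c (Sum.inl ())) = γ • c (Sum.inl ()) ∧
    (∀ i : Fin k, f (c (Sum.inr (Sum.inr (i, false)))) = α i • c (Sum.inr (Sum.inr (i, false)))) ∧
    (∀ i : Fin k, f (c (Sum.inr (Sum.inr (i, true)))) = (γ / α i) • c (Sum.inr (Sum.inr (i, true))))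

/-! A diagonal map `c p ↦ A p • c p` is a Lie automorphism iff `A u = 1` and
`A (u_i) * A (v_i) = A z`: compare both sides on the nonzero brackets `[u, u_i]`, `[u, v_i]`,
`[u_i, v_i]`. This gives the explicit description of the diagonal automorphisms, and diagonal
maps commute. For maximality, the weights `-1, 0, i + 1, -(i + 2)` on `z, u, u_i, v_i` are
pairwise distinct and satisfy these constraints additively, so `A = 2 ^ weight` is a torus
element with one-dimensional eigenspaces; an automorphism commuting with it preserves each of
them, hence is diagonal. -/

open Module Function

section LieAutomorphisms

variable (R L : Type*) [CommRing R] [LieRing L] [LieAlgebra R L]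

def lieAutSubgroup : Subgroup (L ≃ₗ[R] L) where
  carrier := {f | ∀ x y : L, f ⁅x, y⁆ = ⁅f x, f y⁆}
  mul_mem' {f g} hf hg x y := by rw [LinearEquiv.mul_apply, hg x y, hf]; rfl
  one_mem' _ _ := rfl
  inv_mem' {f} hf x y := f.injective <| by
    simp only [LinearEquiv.coe_inv, hf _ _, LinearEquiv.apply_symm_apply]

variable {R L} {ι : Type*}

theorem LinearMap.map_lie_of_basis (c : Basis ι R L) (f : L →ₗ[R] L)
    (h : ∀ p q, f ⁅c p, c q⁆ = ⁅f (c p), f (c q)⁆) (x y : L) :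
    f ⁅x, y⁆ = ⁅f x, f y⁆ := by
  let ad : L →ₗ[R] L →ₗ[R] L := LieAlgebra.ad R L
  have : ad.compr₂ f = (ad ∘ₗ f).compl₂ f :=
    c.ext fun p => c.ext fun q => by simpa [ad] using h p q
  simpa [ad] using LinearMap.congr_fun₂ this x y

variable {c : Basis ι R L} {f : L →ₗ[R] L} {A : ι → R}

theorem map_lie_of_apply_basis_eq_smul (hA : ∀ p, f (c p) = A p • c p)
    (h : ∀ p q, f ⁅c p, c q⁆ = (A p * A q) • ⁅c p, c q⁆) (x y : L) :
    f ⁅x, y⁆ = ⁅f x, f y⁆ :=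
  f.map_lie_of_basis c (fun p q => by rw [h, hA, hA, smul_lie, lie_smul, smul_smul]) x y

theorem apply_lie_basis_eq_smul {p q r : ι} {b : R} (hA : ∀ p, f (c p) = A p • c p)
    (hpq : ⁅c p, c q⁆ = b • c r) (hr : A p * A q = A r) :
    f ⁅c p, c q⁆ = (A p * A q) • ⁅c p, c q⁆ := by
  rw [hpq, map_smul, hA, hr, smul_comm]

end LieAutomorphisms

section Diagonal

variable {ι F M : Type*} [Field F] [AddCommGroup M] [Module F M] {c : Basis ι F M}

theorem LinearEquiv.ne_zero_of_apply_basis_eq_smul {f : M ≃ₗ[F] M} {p : ι} {a : F}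
    (h : f (c p) = a • c p) : a ≠ 0 := by
  rintro rfl
  rw [zero_smul, f.map_eq_zero_iff] at h
  exact c.ne_zero p h

variable (c) in
def diagSubgroup : Subgroup (M ≃ₗ[F] M) where
  carrier := {f | ∀ p, ∃ a : F, f (c p) = a • c p}
  mul_mem' {f g} hf hg p := by
    obtain ⟨a, ha⟩ := hf p
    obtain ⟨b, hb⟩ := hg p
    exact ⟨b * a, by rw [LinearEquiv.mul_apply, hb, map_smul, ha, smul_smul]⟩
  one_mem' p := ⟨1, (one_smul F _).symm⟩
  inv_mem' {f} hf p := by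
    obtain ⟨a, ha⟩ := hf p
    refine ⟨a⁻¹, f.symm_apply_eq.mpr ?_⟩
    rw [map_smul, ha, smul_smul, inv_mul_cancel₀ (f.ne_zero_of_apply_basis_eq_smul ha),
      one_smul]

theorem diagSubgroup.mul_comm {f g : M ≃ₗ[F] M} (hf : f ∈ diagSubgroup c)
    (hg : g ∈ diagSubgroup c) : f * g = g * f := by
  choose a ha using hf
  choose b hb using hg
  refine LinearEquiv.toLinearMap_injective (c.ext fun p => ?_)
  change f (g (c p)) = g (f (c p))
  rw [hb, map_smul, ha, map_smul, hb, smul_smul, smul_smul, _root_.mul_comm]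

theorem Module.Basis.repr_apply_of_apply_basis_eq_smul (c : Basis ι F M) {g : M →ₗ[F] M}
    {A : ι → F} (hg : ∀ p, g (c p) = A p • c p) (w : M) (q : ι) :
    c.repr (g w) q = A q * c.repr w q := by
  have : c.coord q ∘ₗ g = A q • c.coord q := c.ext fun p => by
    by_cases hpq : p = q
    · subst hpq; simp [hg]
    · simp [hg, hpq]
  simpa using LinearMap.congr_fun this w

theorem mem_diagSubgroup_of_mul_comm {f g : M ≃ₗ[F] M} {A : ι → F} (hA : Injective A)
    (hg : ∀ p, g (c p) = A p • c p) (hfg : f * g = g * f) : f ∈ diagSubgroup c := by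
  intro p
  refine ⟨c.repr (f (c p)) p, c.ext_elem_iff.mpr fun q => ?_⟩
  have hgf : g (f (c p)) = A p • f (c p) := by
    rw [← LinearEquiv.mul_apply, ← hfg, LinearEquiv.mul_apply, hg, map_smul]
  have hcoord := c.repr_apply_of_apply_basis_eq_smul (g := g.toLinearMap) hg (f (c p)) q
  rw [LinearEquiv.coe_coe, hgf, map_smul, Finsupp.smul_apply, smul_eq_mul] at hcoord
  by_cases hqp : q = p
  · subst hqp; simp
  · have : c.repr (f (c p)) q = 0 :=
      (mul_eq_mul_right_iff.mp hcoord).resolve_left fun h => hqp (hA h.symm)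
    simp [this, Ne.symm hqp]

theorem Module.Basis.exists_linearEquiv_apply_eq_smul (c : Basis ι F M) {A : ι → F}
    (hA : ∀ p, A p ≠ 0) : ∃ g : M ≃ₗ[F] M, ∀ p, g (c p) = A p • c p :=
  ⟨c.equiv (c.isUnitSMul fun p => (hA p).isUnit) (Equiv.refl ι), fun p => by
    rw [c.equiv_apply, Equiv.refl_apply, c.isUnitSMul_apply]⟩

end Diagonal

theorem coeff_mul_coeff_eq_of_lie_eq_smul {ι F L : Type*} [Field F] [LieRing L]
    [LieAlgebra F L] {c : Basis ι F L} {f : L →ₗ[F] L} {A : ι → F}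
    (hf : ∀ x y, f ⁅x, y⁆ = ⁅f x, f y⁆) (hA : ∀ p, f (c p) = A p • c p) {p q r : ι} {b : F}
    (hb : b ≠ 0) (hpq : ⁅c p, c q⁆ = b • c r) : A p * A q = A r := by
  have h := hf (c p) (c q)
  rw [hA, hA, smul_lie, lie_smul, hpq, map_smul, hA, smul_smul, smul_smul, smul_smul] at h
  have h' := smul_left_injective F (c.ne_zero r) h
  exact mul_left_cancel₀ hb (by linear_combination -h')

namespace TwIdx

variable {k : ℕ}

abbrev z : TwIdx k := Sum.inl ()
abbrev u : TwIdx k := Sum.inr (Sum.inl ())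
abbrev ui (i : Fin k) : TwIdx k := Sum.inr (Sum.inr (i, false))
abbrev vi (i : Fin k) : TwIdx k := Sum.inr (Sum.inr (i, true))

def regularWeight : TwIdx k → ℤ
  | Sum.inl () => -1
  | Sum.inr (Sum.inl ()) => 0
  | Sum.inr (Sum.inr (i, false)) => i + 1
  | Sum.inr (Sum.inr (i, true)) => -(i + 2)

theorem regularWeight_injective : Injective (regularWeight (k := k)) := by
  rintro (_ | _ | ⟨i, _ | _⟩) (_ | _ | ⟨j, _ | _⟩) h <;>
    simp only [regularWeight] at h <;> first | rfl | omega | (congr; ext; omega)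

theorem exists_regular_weights (F : Type*) [Field F] [CharZero F] :
    ∃ A : TwIdx k → F, Injective A ∧ (∀ p, A p ≠ 0) ∧ A u = 1 ∧
      ∀ i, A (ui i) * A (vi i) = A z := by
  refine ⟨fun p => (2 : F) ^ regularWeight p, fun p q h => regularWeight_injective ?_,
    fun p => zpow_ne_zero _ two_ne_zero, zpow_zero 2, fun i => ?_⟩
  · refine zpow_right_injective₀ (by norm_num : (0 : ℚ) < 2) (by norm_num)
      (Rat.cast_injective (α := F) ?_)
    push_cast
    exact h
  · rw [← zpow_add₀ two_ne_zero]
    congr 1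
    simp only [regularWeight]
    ring

end TwIdx

open TwIdx

structure IsTwistedHeisenbergBasis {F L : Type*} [Field F] [LieRing L] [LieAlgebra F L]
    {k : ℕ} (lam : Fin k → F) (c : Basis (TwIdx k) F L) : Prop where
  lie_u_ui : ∀ i, ⁅c u, c (ui i)⁆ = lam i • c (ui i)
  lie_u_vi : ∀ i, ⁅c u, c (vi i)⁆ = -lam i • c (vi i)
  lie_ui_vi : ∀ i, ⁅c (ui i), c (vi i)⁆ = (-2 * lam i) • c z
  lie_eq_zero : ∀ p q, ¬ TwPair p q → ⁅c p, c q⁆ = 0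

namespace IsTwistedHeisenbergBasis

variable {F L : Type*} [Field F] [LieRing L] [LieAlgebra F L] {k : ℕ} {lam : Fin k → F}
  {c : Basis (TwIdx k) F L}

theorem map_lie_of_apply_basis_eq_smul (hc : IsTwistedHeisenbergBasis lam c) {f : L →ₗ[F] L}
    {A : TwIdx k → F} (hA : ∀ p, f (c p) = A p • c p) (hu : A u = 1)
    (huv : ∀ i, A (ui i) * A (vi i) = A z) (x y : L) : f ⁅x, y⁆ = ⁅f x, f y⁆ := by
  refine _root_.map_lie_of_apply_basis_eq_smul hA (fun p q => ?_) x y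
  have swap : ∀ p q, f ⁅c p, c q⁆ = (A p * A q) • ⁅c p, c q⁆ →
      f ⁅c q, c p⁆ = (A q * A p) • ⁅c q, c p⁆ := fun p q h => by
    rw [← lie_skew, map_neg, h, mul_comm, smul_neg]
  have h_u_ui i := apply_lie_basis_eq_smul hA (hc.lie_u_ui i) (by rw [hu, one_mul])
  have h_u_vi i := apply_lie_basis_eq_smul hA (hc.lie_u_vi i) (by rw [hu, one_mul])
  have h_ui_vi i := apply_lie_basis_eq_smul hA (hc.lie_ui_vi i) (huv i)
  by_cases hpq : TwPair p q
  · obtain ⟨i, s, ⟨rfl, rfl⟩ | ⟨rfl, rfl⟩ | ⟨rfl, rfl⟩⟩ := hpq <;> cases s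
    exacts [h_ui_vi i, swap _ _ (h_ui_vi i), h_u_ui i, h_u_vi i,
      swap _ _ (h_u_ui i), swap _ _ (h_u_vi i)]
  · rw [hc.lie_eq_zero p q hpq, map_zero, smul_zero]

theorem isDiagTwAut_iff [CharZero F] (hc : IsTwistedHeisenbergBasis lam c) (hk : 0 < k)
    (hlam : ∀ i, lam i ≠ 0) {f : L ≃ₗ[F] L} (hf : ∀ x y, f ⁅x, y⁆ = ⁅f x, f y⁆) :
    f ∈ diagSubgroup c ↔ IsDiagTwAut c f := by
  constructor
  · intro hdiag
    choose A hA using hdiag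
    have hA0 p : A p ≠ 0 := f.ne_zero_of_apply_basis_eq_smul (hA p)
    have huv i : A (ui i) * A (vi i) = A z :=
      coeff_mul_coeff_eq_of_lie_eq_smul hf hA (by simp [hlam i]) (hc.lie_ui_vi i)
    have hu : A u = 1 :=
      (mul_eq_right₀ (hA0 _)).mp <|
        coeff_mul_coeff_eq_of_lie_eq_smul hf hA (hlam ⟨0, hk⟩) (hc.lie_u_ui ⟨0, hk⟩)
    refine ⟨A z, fun i => A (ui i), hA0 z, fun i => hA0 (ui i), by rw [hA, hu, one_smul],
      hA z, fun i => hA (ui i), fun i => ?_⟩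
    rw [hA, ← huv, mul_div_cancel_left₀ _ (hA0 _)]
  · rintro ⟨γ, α, -, -, hu, hz, hui, hvi⟩ (_ | _ | ⟨i, _ | _⟩)
    exacts [⟨γ, hz⟩, ⟨1, by rw [hu, one_smul]⟩, ⟨α i, hui i⟩, ⟨γ / α i, hvi i⟩]

theorem exists_regular_mem [CharZero F] (hc : IsTwistedHeisenbergBasis lam c) :
    ∃ g ∈ lieAutSubgroup F L ⊓ diagSubgroup c,
      ∃ A : TwIdx k → F, Injective A ∧ ∀ p, g (c p) = A p • c p := by
  obtain ⟨A, hAinj, hA0, hu, huv⟩ := exists_regular_weights (k := k) F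
  obtain ⟨g, hg⟩ := c.exists_linearEquiv_apply_eq_smul hA0
  exact ⟨g, ⟨hc.map_lie_of_apply_basis_eq_smul (f := g.toLinearMap) hg hu huv,
    fun p => ⟨A p, hg p⟩⟩, A, hAinj, hg⟩

end IsTwistedHeisenbergBasis

theorem twisted_heisenberg_maximal_torus_general
    (F : Type*) [Field F] [CharZero F]
    (L : Type*) [LieRing L] [LieAlgebra F L] (k : ℕ) (hk : 0 < k)
    (lam : Fin k → F) (hlam : ∀ i, lam i ≠ 0)
    (c : Module.Basis (TwIdx k) F L)
    (huu : ∀ i : Fin k, ⁅c (Sum.inr (Sum.inl ())), c (Sum.inr (Sum.inr (i, false)))⁆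
      = lam i • c (Sum.inr (Sum.inr (i, false))))
    (huv : ∀ i : Fin k, ⁅c (Sum.inr (Sum.inl ())), c (Sum.inr (Sum.inr (i, true)))⁆
      = -(lam i) • c (Sum.inr (Sum.inr (i, true))))
    (huvz : ∀ i : Fin k, ⁅c (Sum.inr (Sum.inr (i, false))), c (Sum.inr (Sum.inr (i, true)))⁆
      = (-(2 : F) * lam i) • c (Sum.inl ()))
    (h0 : ∀ p q : TwIdx k, ¬ TwPair p q → ⁅c p, c q⁆ = 0) :
    ∃ T : Subgroup (L ≃ₗ[F] L),
      -- T is the group of automorphisms diagonal w.r.t. the basis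
      (↑T = {f : L ≃ₗ[F] L | (∀ x y : L, f ⁅x, y⁆ = ⁅f x, f y⁆) ∧
          ∀ p : TwIdx k, ∃ cst : F, f (c p) = cst • c p}) ∧
      -- T consists exactly of the stated diagonal maps
      (↑T = {f : L ≃ₗ[F] L | (∀ x y : L, f ⁅x, y⁆ = ⁅f x, f y⁆) ∧ IsDiagTwAut c f}) ∧
      -- T is abelian
      (∀ f ∈ T, ∀ g ∈ T, f * g = g * f) ∧
      -- maximality: any automorphism commuting with all of T lies in T
      (∀ f : L ≃ₗ[F] L, (∀ x y : L, f ⁅x, y⁆ = ⁅f x, f y⁆) →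
        (∀ g ∈ T, f * g = g * f) → f ∈ T) := by
  have hc : IsTwistedHeisenbergBasis lam c := ⟨huu, huv, huvz, h0⟩
  refine ⟨lieAutSubgroup F L ⊓ diagSubgroup c, rfl, ?_,
    fun f hf g hg => diagSubgroup.mul_comm hf.2 hg.2, fun f hf hcomm => ?_⟩
  · ext f
    exact and_congr_right (hc.isDiagTwAut_iff hk hlam)
  · obtain ⟨g, hgT, A, hAinj, hg⟩ := hc.exists_regular_mem
    exact ⟨hf, mem_diagSubgroup_of_mul_comm hAinj hg (hcomm g hgT)⟩

/-- Proposition 6.1(a): in the twisted Heisenberg algebra `H_n^λ` with basis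
`{u, z, u_i = e_i+ê_i, v_i = e_i-ê_i}` (brackets `[u,u_i] = λ_i u_i`,
`[u,v_i] = -λ_i v_i`, `[u_i,v_i] = -2λ_i z`), the group of automorphisms
diagonal with respect to this basis is a maximal torus of `Aut(H_n^λ)`, and it
consists exactly of the maps `u ↦ u`, `z ↦ γz`, `u_i ↦ α_i u_i`,
`v_i ↦ (γ/α_i) v_i`. -/
theorem twisted_heisenberg_maximal_torus
    (F : Type*) [Field F] [IsAlgClosed F] [CharZero F]
    (L : Type*) [LieRing L] [LieAlgebra F L] (k : ℕ) (hk : 0 < k)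
    (lam : Fin k → F) (hlam : ∀ i, lam i ≠ 0)
    (c : Module.Basis (TwIdx k) F L)
    (huu : ∀ i : Fin k, ⁅c (Sum.inr (Sum.inl ())), c (Sum.inr (Sum.inr (i, false)))⁆
      = lam i • c (Sum.inr (Sum.inr (i, false))))
    (huv : ∀ i : Fin k, ⁅c (Sum.inr (Sum.inl ())), c (Sum.inr (Sum.inr (i, true)))⁆
      = -(lam i) • c (Sum.inr (Sum.inr (i, true))))
    (huvz : ∀ i : Fin k, ⁅c (Sum.inr (Sum.inr (i, false))), c (Sum.inr (Sum.inr (i, true)))⁆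
      = (-(2 : F) * lam i) • c (Sum.inl ()))
    (h0 : ∀ p q : TwIdx k, ¬ TwPair p q → ⁅c p, c q⁆ = 0) :
    ∃ T : Subgroup (L ≃ₗ[F] L),
      -- T is the group of automorphisms diagonal w.r.t. the basis
      (↑T = {f : L ≃ₗ[F] L | (∀ x y : L, f ⁅x, y⁆ = ⁅f x, f y⁆) ∧
          ∀ p : TwIdx k, ∃ cst : F, f (c p) = cst • c p}) ∧
      -- T consists exactly of the stated diagonal maps
      (↑T = {f : L ≃ₗ[F] L | (∀ x y : L, f ⁅x, y⁆ = ⁅f x, f y⁆) ∧ IsDiagTwAut c f}) ∧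
      -- T is abelian
      (∀ f ∈ T, ∀ g ∈ T, f * g = g * f) ∧
      -- maximality: any automorphism commuting with all of T lies in T
      (∀ f : L ≃ₗ[F] L, (∀ x y : L, f ⁅x, y⁆ = ⁅f x, f y⁆) →
        (∀ g ∈ T, f * g = g * f) → f ∈ T) :=
  twisted_heisenberg_maximal_torus_general F L k hk lam hlam c huu huv huvz h0
end
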